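/- arXiv:1703.06441 — 2 statements merged into one kernel-verified Lean document; each statement's English description precedes it below -/
import Mathlib

section
/- Let Z₁, Z₂, Z₃ be Hilbert spaces, F ∈ L(Z₁, Z₃) and G ∈ L(Z₂, Z₃) bounded linear operators. Then the following are equivalent: (a) Ran(F) ⊆ Ran(G); (b) there exists c > 0 such that ‖F* z‖ ≤ c‖G* z‖ for all z ∈ Z₃; (c) there exists a bounded operator U ∈ L(Z₁, Z₂) such that F = G ∘ U. -/
/-!
(a) ⇒ (c): `G` is injective on `(ker G)ᗮ` and has the same range there, so `F` lifts to a linear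
map into `(ker G)ᗮ` whose graph `{(x, y) | G y = F x}` is closed; by the closed graph theorem the
lift is bounded.

(b) ⇒ (c): the estimate makes `G* z ↦ F* z` a well-defined bounded map on `Ran G*`; extending it
to the closure and precomposing with the orthogonal projection gives `V` with `V G* = F*`, and
`U = V*` factors `F = G U`.
-/

open ContinuousLinearMap

theorem LinearMap.denseRange_codRestrict_topologicalClosure_range {R M N : Type*} [Semiring R]
    [AddCommMonoid M] [Module R M] [AddCommMonoid N] [Module R N] [TopologicalSpace N]
    [ContinuousAdd N] [ContinuousConstSMul R N] (A : M →ₗ[R] N) :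
    DenseRange (A.codRestrict A.range.topologicalClosure
      fun z ↦ A.range.le_topologicalClosure ⟨z, rfl⟩) := by
  rw [DenseRange, Subtype.dense_iff, ← Set.range_comp]
  exact (Submodule.topologicalClosure_coe _).le

namespace ContinuousLinearMap

variable {𝕜 E₁ E₂ E₃ : Type*} [RCLike 𝕜]
  [NormedAddCommGroup E₁] [NormedSpace 𝕜 E₁]
  [NormedAddCommGroup E₂] [InnerProductSpace 𝕜 E₂]
  [NormedAddCommGroup E₃] [NormedSpace 𝕜 E₃]

theorem injective_comp_subtype_ker_orthogonal (G : E₂ →L[𝕜] E₃) :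
    Function.Injective (G.toLinearMap ∘ₗ G.kerᗮ.subtype) := by
  rw [← LinearMap.ker_eq_bot, LinearMap.ker_comp, ← Submodule.disjoint_iff_comap_eq_bot]
  exact (Submodule.orthogonal_disjoint _).symm

theorem range_comp_subtype_ker_orthogonal [CompleteSpace E₂] (G : E₂ →L[𝕜] E₃) :
    (G.toLinearMap ∘ₗ G.kerᗮ.subtype).range = G.range := by
  refine le_antisymm (LinearMap.range_comp_le_range _ _) ?_
  rintro _ ⟨y, rfl⟩
  refine ⟨⟨y - G.ker.starProjection y, G.ker.sub_starProjection_mem_orthogonal y⟩, ?_⟩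
  simpa using LinearMap.mem_ker.mp (G.ker.starProjection_apply_mem y)

theorem exists_comp_eq_of_range_subset [CompleteSpace E₁] [CompleteSpace E₂]
    (F : E₁ →L[𝕜] E₃) (G : E₂ →L[𝕜] E₃) (h : Set.range F ⊆ Set.range G) :
    ∃ U : E₁ →L[𝕜] E₂, F = G.comp U := by
  have hF : ∀ x, F x ∈ (G.toLinearMap ∘ₗ G.kerᗮ.subtype).range := fun x ↦ by
    rw [range_comp_subtype_ker_orthogonal]
    exact h ⟨x, rfl⟩
  let W := F.toLinearMap.codRestrictOfInjective _ G.injective_comp_subtype_ker_orthogonal hF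
  have hGW : ∀ x, G (W x) = F x :=
    LinearMap.codRestrictOfInjective_comp_apply _ _ G.injective_comp_subtype_ker_orthogonal hF
  have hgraph : (W.graph : Set (E₁ × G.kerᗮ)) = {p | G p.2 = F p.1} := by
    ext ⟨x, k⟩
    change k = W x ↔ G k = F x
    rw [← hGW]
    exact G.injective_comp_subtype_ker_orthogonal.eq_iff.symm
  have hW : Continuous W :=
    W.continuous_of_isClosed_graph <| hgraph ▸ isClosed_eq (by fun_prop) (by fun_prop)
  exact ⟨G.kerᗮ.subtypeL.comp ⟨W, hW⟩, ext fun x ↦ (hGW x).symm⟩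

theorem exists_comp_eq_of_norm_le [CompleteSpace E₁] [CompleteSpace E₂]
    (A : E₃ →L[𝕜] E₂) (B : E₃ →L[𝕜] E₁) (c : ℝ) (h : ∀ z, ‖B z‖ ≤ c * ‖A z‖) :
    ∃ V : E₂ →L[𝕜] E₁, V.comp A = B := by
  set K := A.range.topologicalClosure
  let A' : E₃ →ₗ[𝕜] K :=
    A.toLinearMap.codRestrict K fun z ↦ A.range.le_topologicalClosure ⟨z, rfl⟩
  have hW : ∀ z, B.toLinearMap.extendOfNorm A' (A' z) = B z :=
    LinearMap.extendOfNorm_eq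
      A.toLinearMap.denseRange_codRestrict_topologicalClosure_range ⟨c, h⟩
  refine ⟨(B.toLinearMap.extendOfNorm A').comp K.orthogonalProjectionOnto, ext fun z ↦ ?_⟩
  rw [comp_apply, ← hW z]
  exact congrArg _ (K.orthogonalProjectionOnto_mem_subspace_eq_self (A' z))

end ContinuousLinearMap

/-- Douglas' range-inclusion / majorization / factorization lemma. -/
theorem douglas_lemma
    {Z₁ Z₂ Z₃ : Type*}
    [NormedAddCommGroup Z₁] [InnerProductSpace ℂ Z₁] [CompleteSpace Z₁]
    [NormedAddCommGroup Z₂] [InnerProductSpace ℂ Z₂] [CompleteSpace Z₂]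
    [NormedAddCommGroup Z₃] [InnerProductSpace ℂ Z₃] [CompleteSpace Z₃]
    (F : Z₁ →L[ℂ] Z₃) (G : Z₂ →L[ℂ] Z₃) :
    List.TFAE
      [Set.range F ⊆ Set.range G,
       ∃ c > 0, ∀ z : Z₃, ‖adjoint F z‖ ≤ c * ‖adjoint G z‖,
       ∃ U : Z₁ →L[ℂ] Z₂, F = G.comp U] := by
  tfae_have 1 → 3 := exists_comp_eq_of_range_subset F G
  tfae_have 3 → 1 := by
    rintro ⟨U, rfl⟩
    exact Set.range_comp_subset_range U G
  tfae_have 3 → 2 := by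
    rintro ⟨U, rfl⟩
    refine ⟨‖adjoint U‖ + 1, by positivity, fun z ↦ ?_⟩
    rw [adjoint_comp, comp_apply]
    exact (le_opNorm _ _).trans (by gcongr; linarith)
  tfae_have 2 → 3 := by
    rintro ⟨c, -, hc⟩
    obtain ⟨V, hV⟩ := exists_comp_eq_of_norm_le (adjoint G) (adjoint F) c hc
    exact ⟨adjoint V, by rw [← adjoint_adjoint F, ← hV, adjoint_comp, adjoint_adjoint]⟩
  tfae_finish
end

section
/- Let ε with 0 < ε < σ and f : [0,σ] → ℝ continuous. Then (1/ε)∫₀^ε f(s) ds = (1/σ)∫₀^σ f(s) ds − ∫_ε^σ (1/t²)(∫₀^t (f(t) − f(s)) ds) dt. -/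
/-!
Write `F x = ∫₀ˣ f`. Since `∫₀ᵗ (f t - f s) ds = t f t - F t` and `(F t / t)' = (t f t - F t) / t²`,
the double integral on the right is `∫_ε^σ (F t / t)' dt = F σ / σ - F ε / ε` by the fundamental
theorem of calculus, which rearranges to the identity.
-/

open Set intervalIntegral MeasureTheory

theorem intervalIntegral.integral_const_sub_of_intervalIntegrable {f : ℝ → ℝ} {a b : ℝ} (c : ℝ)
    (hf : IntervalIntegrable f volume a b) :
    ∫ s in a..b, (c - f s) = (b - a) * c - ∫ s in a..b, f s := by
  rw [integral_sub intervalIntegrable_const hf, integral_const, smul_eq_mul]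

theorem ContinuousOn.continuousOn_primitive_Icc {f : ℝ → ℝ} {a b : ℝ}
    (hf : ContinuousOn f (Icc a b)) (hab : a ≤ b) :
    ContinuousOn (fun x => ∫ s in a..x, f s) (Icc a b) := by
  have h := continuousOn_primitive_interval (μ := volume) (by
    rw [uIcc_of_le hab]; exact hf.integrableOn_Icc)
  rwa [uIcc_of_le hab] at h

theorem ContinuousOn.hasDerivAt_primitive_of_mem_Ioo {f : ℝ → ℝ} {a b x : ℝ}
    (hf : ContinuousOn f (Icc a b)) (hx : x ∈ Ioo a b) :
    HasDerivAt (fun u => ∫ s in a..u, f s) (f x) x := by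
  have hfx : ContinuousAt f x := hf.continuousAt (Icc_mem_nhds hx.1 hx.2)
  refine integral_hasDerivAt_right ?_
    ((hf.mono Ioo_subset_Icc_self).stronglyMeasurableAtFilter isOpen_Ioo x hx) hfx
  exact (hf.mono (Icc_subset_Icc le_rfl hx.2.le)).intervalIntegrable_of_Icc hx.1.le

theorem ContinuousOn.integral_deriv_average_eq_sub {f : ℝ → ℝ} {b c : ℝ}
    (hf : ContinuousOn f (Icc 0 b)) (hc : 0 < c) (hcb : c ≤ b) :
    ∫ t in c..b, (f t * t - ∫ s in (0:ℝ)..t, f s) / t ^ 2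
      = (∫ s in (0:ℝ)..b, f s) / b - (∫ s in (0:ℝ)..c, f s) / c := by
  set F : ℝ → ℝ := fun x => ∫ s in (0:ℝ)..x, f s
  have hsub : Icc c b ⊆ Icc 0 b := Icc_subset_Icc hc.le le_rfl
  have hne : ∀ t ∈ Icc c b, t ≠ 0 := fun t ht => (hc.trans_le ht.1).ne'
  have hF : ContinuousOn F (Icc c b) :=
    (hf.continuousOn_primitive_Icc (hc.le.trans hcb)).mono hsub
  have hderiv : ContinuousOn (fun t => (f t * t - F t) / t ^ 2) (Icc c b) :=
    (((hf.mono hsub).mul continuousOn_id).sub hF).div (continuousOn_pow 2)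
      fun t ht => pow_ne_zero 2 (hne t ht)
  refine integral_eq_sub_of_hasDerivAt_of_le hcb (hF.div continuousOn_id hne) (fun t ht => ?_)
    (hderiv.intervalIntegrable_of_Icc hcb)
  simpa using (hf.hasDerivAt_primitive_of_mem_Ioo ⟨hc.trans ht.1, ht.2⟩).div (hasDerivAt_id t)
    (hc.trans ht.1).ne'

/-- The finite-`ε` averaging identity for continuous functions. -/
theorem averaging_identity_eps
    (σ ε : ℝ) (hε : 0 < ε) (hεσ : ε < σ) (f : ℝ → ℝ)
    (hf : ContinuousOn f (Set.Icc 0 σ)) :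
    (1 / ε) * ∫ s in (0:ℝ)..ε, f s
      = (1 / σ) * (∫ s in (0:ℝ)..σ, f s)
        - ∫ t in ε..σ, (1 / t ^ 2) * ∫ s in (0:ℝ)..t, (f t - f s) := by
  have hinner : EqOn (fun t => (1 / t ^ 2) * ∫ s in (0:ℝ)..t, (f t - f s))
      (fun t => (f t * t - ∫ s in (0:ℝ)..t, f s) / t ^ 2) (uIcc ε σ) := by
    intro t ht
    rw [uIcc_of_le hεσ.le] at ht
    have hft : IntervalIntegrable f volume 0 t :=
      (hf.mono (Icc_subset_Icc le_rfl ht.2)).intervalIntegrable_of_Icc (hε.le.trans ht.1)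
    simp only [integral_const_sub_of_intervalIntegrable _ hft]
    ring
  rw [integral_congr hinner, hf.integral_deriv_average_eq_sub hε hεσ.le]
  ring
end
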